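/- Let b1, b2 be nonzero squarefree integers all of whose prime factors lie in S = {2, q} ∪ {primes dividing n}. If q divides b1 and q does not divide b2, then the homogeneous space attached to (b1, b2) has no q-adic solution. -/

import Mathlib

/-!
Since `q ∣ b1` exactly once and `q ∤ b2`, the `q`-adic valuations of `b1·z1²` and `b1·b2·z3²`
are odd while that of `b2·z2²` is even; both right-hand sides `2^m·n²` and `-2^m` are `q`-adic
units because `q` is odd and `n² ≡ -1 (mod q)`. A difference of two terms of distinct
valuations has the smaller one as valuation, so the first equation forces `v(b1·z1²) ≥ 1`;
then in the second equation `b1·z1² - b1·b2·z3²` has positive or odd valuation, never `0`.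
-/

/-- A `K`-solution of the homogeneous space attached to the pair `(b1, b2)`:
a triple `(z1, z2, z3)` in `K^3` with `z1 ≠ 0`, `z2 ≠ 0`, satisfying
`b1·z1² − b2·z2² = 2^m·n²` and `b1·z1² − b1·b2·z3² = −2^m`. -/
def HSol (K : Type*) [Field K] (m n : ℕ) (b1 b2 : ℤ) (z1 z2 z3 : K) : Prop :=
  z1 ≠ 0 ∧ z2 ≠ 0 ∧
    (b1 : K) * z1 ^ 2 - (b2 : K) * z2 ^ 2 = 2 ^ m * (n : K) ^ 2 ∧
    (b1 : K) * z1 ^ 2 - (b1 : K) * (b2 : K) * z3 ^ 2 = -(2 ^ m)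

namespace Padic

variable {p : ℕ} [hp : Fact p.Prime]

lemma valuation_neg (x : ℚ_[p]) : (-x).valuation = x.valuation := by
  have h := valuation_pow (-x) 2
  rw [neg_sq, valuation_pow] at h
  omega

lemma le_valuation_sub {x y : ℚ_[p]} (hxy : x - y ≠ 0) :
    min x.valuation y.valuation ≤ (x - y).valuation := by
  rw [sub_eq_add_neg] at hxy ⊢
  simpa only [valuation_neg] using le_valuation_add hxy

lemma valuation_sub_of_valuation_ne {x y : ℚ_[p]} (hx : x ≠ 0) (hy : y ≠ 0)
    (h : x.valuation ≠ y.valuation) : (x - y).valuation = min x.valuation y.valuation := by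
  have hxy : x - y ≠ 0 := sub_ne_zero.mpr (ne_of_apply_ne _ h)
  have h₁ := le_valuation_sub hxy
  have h₂ : min (x - y).valuation y.valuation ≤ x.valuation := by
    simpa using le_valuation_add (x := x - y) (y := y) (by simpa using hx)
  have h₃ : min x.valuation (x - y).valuation ≤ y.valuation := by
    simpa using le_valuation_sub (x := x) (y := x - y) (by simpa using hy)
  omega

lemma valuation_mul_sq {a z : ℚ_[p]} (ha : a ≠ 0) (hz : z ≠ 0) :
    (a * z ^ 2).valuation = a.valuation + 2 * z.valuation := by
  rw [valuation_mul ha (pow_ne_zero 2 hz), valuation_pow]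
  norm_num

lemma valuation_natCast_eq_zero {k : ℕ} (hk : ¬ p ∣ k) : (k : ℚ_[p]).valuation = 0 := by
  rw [valuation_natCast, padicValNat.eq_zero_of_not_dvd hk, Nat.cast_zero]

lemma valuation_intCast_eq_one_of_squarefree {b : ℤ} (hb : Squarefree b) (hpb : (p : ℤ) ∣ b) :
    (b : ℚ_[p]).valuation = 1 := by
  rw [valuation_intCast, padicValInt, ← Nat.factorization_def _ hp.out,
    Nat.factorization_eq_one_of_squarefree (Int.squarefree_natAbs.mpr hb) hp.out
      (Int.ofNat_dvd_left.mp hpb), Nat.cast_one]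

lemma not_sub_mul_sq_eq_of_odd_of_even {a₁ a₂ c₁ c₂ z₁ z₂ z₃ : ℚ_[p]} (ha₁ : a₁ ≠ 0)
    (ha₂ : a₂ ≠ 0) (hodd : Odd a₁.valuation) (heven : Even a₂.valuation)
    (hc₁ : c₁.valuation = 0) (hc₂ : c₂ ≠ 0) (hc₂v : c₂.valuation = 0) (hz₁ : z₁ ≠ 0)
    (hz₂ : z₂ ≠ 0) (h₁ : a₁ * z₁ ^ 2 - a₂ * z₂ ^ 2 = c₁)
    (h₂ : a₁ * z₁ ^ 2 - a₁ * a₂ * z₃ ^ 2 = c₂) : False := by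
  set A := a₁ * z₁ ^ 2
  have hA0 : A ≠ 0 := mul_ne_zero ha₁ (pow_ne_zero 2 hz₁)
  obtain ⟨k, hk⟩ : Odd A.valuation := by
    rw [valuation_mul_sq ha₁ hz₁]
    exact hodd.add_even (even_two_mul _)
  have hB : Even (a₂ * z₂ ^ 2).valuation := by
    rw [valuation_mul_sq ha₂ hz₂]
    exact heven.add (even_two_mul _)
  -- A valuation of opposite parity cannot cancel it, so `A` is integral.
  have hA_pos : 0 < A.valuation := by
    have hne : A.valuation ≠ (a₂ * z₂ ^ 2).valuation := fun h ↦
      Int.not_even_iff_odd.mpr ⟨k, hk⟩ (h ▸ hB)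
    have := valuation_sub_of_valuation_ne hA0 (mul_ne_zero ha₂ (pow_ne_zero 2 hz₂)) hne
    rw [h₁, hc₁] at this
    omega
  rcases eq_or_ne z₃ 0 with rfl | hz₃
  · rw [zero_pow two_ne_zero, mul_zero, sub_zero] at h₂
    rw [h₂] at hA_pos
    omega
  have hD0 : a₁ * a₂ * z₃ ^ 2 ≠ 0 := mul_ne_zero (mul_ne_zero ha₁ ha₂) (pow_ne_zero 2 hz₃)
  obtain ⟨l, hl⟩ : Odd (a₁ * a₂ * z₃ ^ 2).valuation := by
    rw [valuation_mul_sq (mul_ne_zero ha₁ ha₂) hz₃, valuation_mul ha₁ ha₂]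
    exact (hodd.add_even heven).add_even (even_two_mul _)
  by_cases hAD : A.valuation = (a₁ * a₂ * z₃ ^ 2).valuation
  · have := le_valuation_sub (h₂ ▸ hc₂)
    rw [h₂, hc₂v] at this
    omega
  · have := valuation_sub_of_valuation_ne hA0 hD0 hAD
    rw [h₂, hc₂v] at this
    omega

end Padic

theorem stmt_5_general (m n q : ℕ) [hq : Fact (Nat.Prime q)] (hqodd : Odd q)
    (hnq : n ^ 2 + 1 = 2 * q)
    (b1 b2 : ℤ) (hb1 : b1 ≠ 0) (hb2 : b2 ≠ 0)
    (hb1sf : Squarefree b1)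
    (hqb1 : (q : ℤ) ∣ b1) (hqb2 : ¬ (q : ℤ) ∣ b2) :
    ¬ ∃ z1 z2 z3 : ℚ_[q], HSol ℚ_[q] m n b1 b2 z1 z2 z3 := by
  rintro ⟨z1, z2, z3, hz1, hz2, e1, e2⟩
  have hq2 : ¬ q ∣ 2 := fun h ↦ by
    rw [(Nat.prime_dvd_prime_iff_eq hq.out Nat.prime_two).mp h] at hqodd
    exact Nat.not_odd_iff_even.mpr even_two hqodd
  have hqn : ¬ q ∣ n := fun h ↦ hq.out.one_lt.ne' <| Nat.dvd_one.mp <|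
    (Nat.dvd_add_right (dvd_pow h two_ne_zero)).mp (hnq ▸ dvd_mul_left q 2)
  have h2m : ¬ q ∣ 2 ^ m := fun h ↦ hq2 (hq.out.dvd_of_dvd_pow h)
  apply Padic.not_sub_mul_sq_eq_of_odd_of_even (Int.cast_ne_zero.mpr hb1)
    (Int.cast_ne_zero.mpr hb2) _ _ _ _ _ hz1 hz2 e1 e2
  · rw [Padic.valuation_intCast_eq_one_of_squarefree hb1sf hqb1]
    exact odd_one
  · rw [Padic.valuation_intCast, padicValInt.eq_zero_of_not_dvd hqb2]
    exact Even.zero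
  · exact_mod_cast Padic.valuation_natCast_eq_zero (p := q) (k := 2 ^ m * n ^ 2)
      fun h ↦ ((Nat.Prime.dvd_mul hq.out).mp h).elim h2m (hqn ∘ hq.out.dvd_of_dvd_pow)
  · exact neg_ne_zero.mpr (pow_ne_zero m two_ne_zero)
  · rw [Padic.valuation_neg]
    exact_mod_cast Padic.valuation_natCast_eq_zero h2m

theorem stmt_5 (m n q : ℕ) (hm : 0 < m) (hnpos : 0 < n) (hnodd : Odd n)
    (hnsf : Squarefree n) [hq : Fact (Nat.Prime q)] (hqodd : Odd q)
    (hnq : n ^ 2 + 1 = 2 * q)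
    (b1 b2 : ℤ) (hb1 : b1 ≠ 0) (hb2 : b2 ≠ 0)
    (hb1sf : Squarefree b1) (hb2sf : Squarefree b2)
    (hb1S : ∀ r : ℕ, Nat.Prime r → (r : ℤ) ∣ b1 → r = 2 ∨ r = q ∨ r ∣ n)
    (hb2S : ∀ r : ℕ, Nat.Prime r → (r : ℤ) ∣ b2 → r = 2 ∨ r = q ∨ r ∣ n)
    (hqb1 : (q : ℤ) ∣ b1) (hqb2 : ¬ (q : ℤ) ∣ b2) :
    ¬ ∃ z1 z2 z3 : ℚ_[q], HSol ℚ_[q] m n b1 b2 z1 z2 z3 :=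
  stmt_5_general m n q (hq := hq) hqodd hnq b1 b2 hb1 hb2 hb1sf hqb1 hqb2
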